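/- (Theorem 2 of the paper.) For every ρ ∈ (0,1) and K ≥ 1, the maximum revenue under the preemptive-resume policy strictly exceeds the maximum revenue under the non-preemptive policy: sup over φ ∈ [0,1] of ℛ_PR(φ) > sup over φ ∈ [0,1] of ℛ_NP(φ), where ℛ_NP(φ) = Kρ³φ / (2(1−ρ)(1−φρ)) and ℛ_PR(φ) = (Kφρ² + (2−K)φ²ρ²(1−ρ)) / (2(1−ρ)(1−φρ)). -/

import Mathlib

/-!
Under the non-preemptive policy the revenue is increasing in the paying fraction `φ`, so its
maximum is attained when everybody pays. At `φ = 1` the preemptive-resume revenue exceeds it by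
exactly `ρ² / (1 - ρ)`, independently of `K`, and the preemptive-resume maximum is at least its
value at `φ = 1`.
-/

open Set

noncomputable section

namespace PriorityQueue

def revenueNP (K ρ φ : ℝ) : ℝ := K * ρ ^ 3 * φ / (2 * (1 - ρ) * (1 - φ * ρ))

def revenuePR (K ρ φ : ℝ) : ℝ :=
  (K * φ * ρ ^ 2 + (2 - K) * φ ^ 2 * ρ ^ 2 * (1 - ρ)) / (2 * (1 - ρ) * (1 - φ * ρ))

lemma div_one_sub_mul_le_div_one_sub_mul {ρ φ ψ : ℝ} (hρ : 0 ≤ ρ) (hφψ : φ ≤ ψ)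
    (hψ : ψ * ρ < 1) : φ / (1 - φ * ρ) ≤ ψ / (1 - ψ * ρ) := by
  have hφ : φ * ρ < 1 := (mul_le_mul_of_nonneg_right hφψ hρ).trans_lt hψ
  rw [div_le_div_iff₀ (by linarith) (by linarith)]
  linarith

lemma monotoneOn_revenueNP {K ρ : ℝ} (hK : 0 ≤ K) (hρ0 : 0 ≤ ρ) (hρ1 : ρ < 1) :
    MonotoneOn (revenueNP K ρ) (Iic 1) := by
  intro φ _ ψ hψ hφψ
  have hψρ : ψ * ρ < 1 := by nlinarith [mem_Iic.mp hψ]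
  have hfactor : ∀ x, revenueNP K ρ x = K * ρ ^ 3 / (2 * (1 - ρ)) * (x / (1 - x * ρ)) :=
    fun x ↦ (div_mul_div_comm _ _ _ _).symm
  rw [hfactor, hfactor]
  have h1ρ : 0 < 1 - ρ := by linarith
  have hcoeff : 0 ≤ K * ρ ^ 3 / (2 * (1 - ρ)) := by positivity
  exact mul_le_mul_of_nonneg_left (div_one_sub_mul_le_div_one_sub_mul hρ0 hφψ hψρ) hcoeff

lemma sSup_revenueNP {K ρ : ℝ} (hK : 0 ≤ K) (hρ0 : 0 ≤ ρ) (hρ1 : ρ < 1) :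
    sSup (revenueNP K ρ '' Icc 0 1) = revenueNP K ρ 1 :=
  (((monotoneOn_revenueNP hK hρ0 hρ1).mono Icc_subset_Iic_self).map_isGreatest
    (isGreatest_Icc zero_le_one)).csSup_eq

lemma revenuePR_one_sub_revenueNP_one {K ρ : ℝ} (hρ : ρ ≠ 1) :
    revenuePR K ρ 1 - revenueNP K ρ 1 = ρ ^ 2 / (1 - ρ) := by
  have h1ρ : 1 - ρ ≠ 0 := sub_ne_zero.mpr hρ.symm
  simp only [revenuePR, revenueNP]
  field_simp
  ring

lemma continuousOn_revenuePR {K ρ : ℝ} (hρ : ρ < 1) :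
    ContinuousOn (revenuePR K ρ) (Icc 0 1) := by
  refine ContinuousOn.div (by fun_prop) (by fun_prop) fun φ ⟨hφ0, hφ1⟩ ↦ ?_
  have hφρ : φ * ρ < 1 := by rcases le_or_gt 0 ρ with h | h <;> nlinarith
  have h1ρ : 0 < 1 - ρ := by linarith
  exact (mul_pos (mul_pos two_pos h1ρ) (by linarith)).ne'

end PriorityQueue

end

open PriorityQueue in
/-- Theorem 2 of the paper: For every `ρ ∈ (0,1)` and `K ≥ 1`, the maximum
revenue under the preemptive-resume policy strictly exceeds the maximum revenue under the
non-preemptive policy: `sup_{φ∈[0,1]} ℛ_PR(φ) > sup_{φ∈[0,1]} ℛ_NP(φ)`. -/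
theorem max_revenue_PR_gt_NP (ρ K : ℝ) (hρ0 : 0 < ρ) (hρ1 : ρ < 1) (hK : 1 ≤ K) :
    sSup ((fun φ : ℝ =>
        (K * φ * ρ ^ 2 + (2 - K) * φ ^ 2 * ρ ^ 2 * (1 - ρ)) / (2 * (1 - ρ) * (1 - φ * ρ)))
        '' Set.Icc (0 : ℝ) 1) >
      sSup ((fun φ : ℝ => K * ρ ^ 3 * φ / (2 * (1 - ρ) * (1 - φ * ρ)))
        '' Set.Icc (0 : ℝ) 1) := by
  change sSup (revenueNP K ρ '' Icc 0 1) < sSup (revenuePR K ρ '' Icc 0 1)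
  have hbdd : BddAbove (revenuePR K ρ '' Icc 0 1) :=
    isCompact_Icc.bddAbove_image (continuousOn_revenuePR hρ1)
  have hgap : 0 < ρ ^ 2 / (1 - ρ) := div_pos (by positivity) (by linarith)
  calc sSup (revenueNP K ρ '' Icc 0 1)
      = revenueNP K ρ 1 := sSup_revenueNP (by linarith) hρ0.le hρ1
    _ < revenuePR K ρ 1 := by linarith [revenuePR_one_sub_revenueNP_one (K := K) hρ1.ne]
    _ ≤ sSup (revenuePR K ρ '' Icc 0 1) :=
      le_csSup hbdd (mem_image_of_mem _ (right_mem_Icc.mpr zero_le_one))
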